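/- arXiv:1408.0892 — 3 statements merged into one kernel-verified Lean document; each statement's English description precedes it below -/
import Mathlib

section
/- Let F be a field and R = F⟨e,y⟩/(e² − e), the quotient of the free associative F-algebra on e, y by the relation e² = e. For each n ≥ 1, the two-sided ideal Pₙ generated by {e·yⁱ·e : 1 ≤ i ≤ n−1} (so Pₙ = ⟨eye, ey²e, …, eyⁿ⁻¹e⟩, with P₁ = 0) is a prime two-sided ideal of R. -/
/-- A two-sided ideal `P` of a ring `R` is prime if `P ≠ R` and
`aRb ⊆ P` implies `a ∈ P` or `b ∈ P`. -/
def IsPrimeTSI {R : Type*} [Ring R] (P : TwoSidedIdeal R) : Prop :=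
  P ≠ ⊤ ∧ ∀ a b : R, (∀ r : R, a * r * b ∈ P) → a ∈ P ∨ b ∈ P

/-- The relation `e² = e` on the free algebra `F⟨e,y⟩` (where `e` is the first generator). -/
inductive ERel (F : Type*) [Field F] :
    FreeAlgebra F (Fin 2) → FreeAlgebra F (Fin 2) → Prop
  | idem : ERel F (FreeAlgebra.ι F 0 * FreeAlgebra.ι F 0) (FreeAlgebra.ι F 0)

/-- The algebra `R = F⟨e,y⟩/(e² − e)`. -/
abbrev ERing (F : Type*) [Field F] := RingQuot (ERel F)

/-- The image of `e` in `R`. -/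
noncomputable def Egen (F : Type*) [Field F] : ERing F :=
  RingQuot.mkAlgHom F (ERel F) (FreeAlgebra.ι F 0)

/-- The image of `y` in `R`. -/
noncomputable def Ygen (F : Type*) [Field F] : ERing F :=
  RingQuot.mkAlgHom F (ERel F) (FreeAlgebra.ι F 1)

/-- The ideal `Pₙ = ⟨e yⁱ e : 1 ≤ i ≤ n-1⟩` of `R = F⟨e,y⟩/(e² − e)`. -/
noncomputable def Pe (F : Type*) [Field F] (n : ℕ) : TwoSidedIdeal (ERing F) :=
  TwoSidedIdeal.span {m | ∃ i, 1 ≤ i ∧ i ≤ n - 1 ∧ m = Egen F * (Ygen F) ^ i * Egen F}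

namespace StmtAux

abbrev FM := FreeMonoid (Fin 2)

def Eg : FM := FreeMonoid.of 0
def Yg : FM := FreeMonoid.of 1

def step (s : List ℕ) (x : Fin 2) : List ℕ :=
  match s with
  | [] => [0]
  | a :: t =>
    if x = 0 then (if a = 0 ∧ t ≠ [] then a :: t else 0 :: a :: t)
    else (a + 1) :: t

lemma fin2 : ∀ (x : Fin 2), x = 0 ∨ x = 1 := by decide

lemma step_e (a : ℕ) (t : List ℕ) :
    step (a :: t) 0 = if a = 0 ∧ t ≠ [] then a :: t else 0 :: a :: t := rfl

lemma step_y (a : ℕ) (t : List ℕ) : step (a :: t) 1 = (a + 1) :: t := rfl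

lemma step_ne_nil (s : List ℕ) (x : Fin 2) : step s x ≠ [] := by
  cases s with
  | nil => simp [step]
  | cons a t =>
    rcases fin2 x with rfl | rfl
    · rw [step_e]; split <;> simp
    · rw [step_y]; simp

lemma foldl_step_ne_nil (l : List (Fin 2)) (s : List ℕ) (hs : s ≠ []) :
    List.foldl step s l ≠ [] := by
  induction l generalizing s with
  | nil => exact hs
  | cons x l ih => exact ih _ (step_ne_nil s x)

def nf (w : FM) : List ℕ := List.foldl step [0] w.toList

lemma nf_ne_nil (w : FM) : nf w ≠ [] := foldl_step_ne_nil _ _ (by simp)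

def glueTail (a : ℕ) (s' : List ℕ) : List ℕ → List ℕ
  | [] => s'
  | [c] => if a = 0 ∧ c = 0 ∧ s' ≠ [] then s' else (c + a) :: s'
  | h :: g :: t => h :: glueTail a s' (g :: t)

def glue (s t : List ℕ) : List ℕ :=
  match s, t with
  | s, [] => s
  | [], t => t
  | a :: s', [c] => (c + a) :: s'
  | a :: s', h :: g :: t' => h :: glueTail a s' (g :: t')

lemma glueTail_singleton (a c : ℕ) (s' : List ℕ) :
    glueTail a s' [c] = if a = 0 ∧ c = 0 ∧ s' ≠ [] then s' else (c + a) :: s' := rfl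

lemma glueTail_cons_cons (a h g : ℕ) (s' t : List ℕ) :
    glueTail a s' (h :: g :: t) = h :: glueTail a s' (g :: t) := rfl

lemma glue_nil_right (s : List ℕ) : glue s [] = s := by cases s <;> rfl

lemma glue_singleton (a c : ℕ) (s' : List ℕ) : glue (a :: s') [c] = (c + a) :: s' := rfl

lemma glue_cons_cons (a h g : ℕ) (s' t' : List ℕ) :
    glue (a :: s') (h :: g :: t') = h :: glueTail a s' (g :: t') := rfl

lemma glueTail_ne_nil (a : ℕ) (s' : List ℕ) (t : List ℕ) (ht : t ≠ []) :
    glueTail a s' t ≠ [] := by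
  induction t with
  | nil => exact absurd rfl ht
  | cons h t ih =>
    cases t with
    | nil =>
      rw [glueTail_singleton]
      split
      · rename_i hc; exact hc.2.2
      · simp
    | cons g t₂ => rw [glueTail_cons_cons]; simp

lemma glue_ne_nil (s t : List ℕ) (hs : s ≠ []) : glue s t ≠ [] := by
  match s, t with
  | s, [] => rw [glue_nil_right]; exact hs
  | [], t => exact absurd rfl hs
  | a :: s', [c] => rw [glue_singleton]; simp
  | a :: s', h :: g :: t' => rw [glue_cons_cons]; simp

lemma step_glue (s t : List ℕ) (x : Fin 2) (hs : s ≠ []) (ht : t ≠ []) :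
    step (glue s t) x = glue s (step t x) := by
  obtain ⟨a, s', rfl⟩ : ∃ a s', s = a :: s' := by
    cases s with
    | nil => exact absurd rfl hs
    | cons a s' => exact ⟨a, s', rfl⟩
  match t with
  | [] => exact absurd rfl ht
  | [h] =>
    rcases fin2 x with rfl | rfl
    · -- letter e
      have h2 : step [h] 0 = [0, h] := by rw [step_e]; simp
      rw [glue_singleton, h2, step_e, glue_cons_cons, glueTail_singleton]
      by_cases hc : h + a = 0 ∧ s' ≠ []
      · rw [if_pos hc, if_pos ⟨by omega, by omega, hc.2⟩]
        have ha : a = 0 := by omega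
        have hh : h = 0 := by omega
        subst ha; subst hh; rfl
      · rw [if_neg hc, if_neg (by rintro ⟨h1, h2, h3⟩; exact hc ⟨by omega, h3⟩)]
    · -- letter y
      rw [glue_singleton, step_y, step_y, glue_singleton]
      congr 1; omega
  | h :: g :: t₂ =>
    have hgt : glueTail a s' (g :: t₂) ≠ [] := glueTail_ne_nil _ _ _ (by simp)
    rcases fin2 x with rfl | rfl
    · -- letter e
      rw [glue_cons_cons, step_e, step_e]
      by_cases hh : h = 0
      · subst hh
        rw [if_pos ⟨rfl, hgt⟩, if_pos ⟨rfl, by simp⟩, glue_cons_cons]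
      · rw [if_neg (by rintro ⟨h1, -⟩; exact hh h1), if_neg (by rintro ⟨h1, -⟩; exact hh h1)]
        show _ = glue (a :: s') (0 :: h :: g :: t₂)
        rw [glue_cons_cons, glueTail_cons_cons]
    · -- letter y
      rw [glue_cons_cons, step_y, step_y, glue_cons_cons]

lemma foldl_eq_glue (l : List (Fin 2)) (s : List ℕ) (hs : s ≠ []) :
    List.foldl step s l = glue s (List.foldl step [0] l) := by
  induction l using List.reverseRecOn with
  | nil =>
    obtain ⟨a, s', rfl⟩ : ∃ a s', s = a :: s' := by
      cases s with
      | nil => exact absurd rfl hs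
      | cons a s' => exact ⟨a, s', rfl⟩
    rw [List.foldl_nil, List.foldl_nil, glue_singleton]
    congr 1; omega
  | append_singleton l x ih =>
    rw [List.foldl_append, List.foldl_append, ih]
    exact step_glue _ _ _ hs (foldl_step_ne_nil _ _ (by simp))

end StmtAux
namespace StmtAux

/-- The relation `e * e = e` on the free monoid. -/
inductive MRel : FM → FM → Prop
  | ee : MRel (Eg * Eg) Eg

def C : Con FM := conGen MRel

abbrev M := C.Quotient

def mkM : FM →* M := C.mk'

lemma mkM_surjective : Function.Surjective mkM := Con.mk'_surjective

lemma mkM_ee : mkM (Eg * Eg) = mkM Eg := by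
  have h : C (Eg * Eg) Eg := ConGen.Rel.of _ _ MRel.ee
  exact (Con.eq C).mpr h

lemma mkM_Eg_mul_Eg : mkM Eg * mkM Eg = mkM Eg := by rw [← map_mul, mkM_ee]

/-- The congruence of having equal `step`-folds from every nonempty state. -/
def foldCon : Con FM where
  r u v := ∀ s : List ℕ, s ≠ [] → List.foldl step s u.toList = List.foldl step s v.toList
  iseqv := ⟨fun _ _ _ => rfl, fun h s hs => (h s hs).symm, fun h h' s hs => (h s hs).trans (h' s hs)⟩
  mul' := by
    intro a b c d h h' s hs
    rw [FreeMonoid.toList_mul, FreeMonoid.toList_mul, List.foldl_append, List.foldl_append,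
      h s hs, h' _ (foldl_step_ne_nil _ _ hs)]

lemma C_le_foldCon : C ≤ foldCon := by
  apply Con.conGen_le.mpr
  rintro x y ⟨⟩
  intro s hs
  obtain ⟨a, s', rfl⟩ : ∃ a s', s = a :: s' := by
    cases s with
    | nil => exact absurd rfl hs
    | cons a s' => exact ⟨a, s', rfl⟩
  show List.foldl step _ [0, 0] = List.foldl step _ [0]
  simp only [List.foldl_cons, List.foldl_nil]
  rw [step_e]
  split
  · rename_i hc
    rw [step_e, if_pos hc]
  · rename_i hc
    rw [step_e, if_pos ⟨rfl, by simp⟩]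

def rho (m : M) : List ℕ :=
  Con.liftOn m nf (fun a b h => C_le_foldCon h [0] (by simp))

lemma rho_mk (w : FM) : rho (mkM w) = nf w := rfl

lemma rho_ne_nil (m : M) : rho m ≠ [] := by
  induction m using Con.induction_on with
  | H w => exact nf_ne_nil w

lemma rho_mul (m m' : M) : rho (m * m') = glue (rho m) (rho m') := by
  induction m using Con.induction_on with
  | H u =>
    induction m' using Con.induction_on with
    | H v =>
      show rho (mkM u * mkM v) = _
      rw [← map_mul]
      show nf (u * v) = glue (nf u) (nf v)
      rw [nf, FreeMonoid.toList_mul, List.foldl_append]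
      exact foldl_eq_glue _ _ (nf_ne_nil u)

/-- Canonical word for a (reversed) block list: `wordOf [a₀, …, a_k].reverse`. Here the
argument is in *forward* order: `y^{a₀} e y^{a₁} e ⋯ e y^{a_k}`. -/
def wordOf : List ℕ → FM
  | [] => 1
  | a :: rest => Yg ^ a * (rest.map (fun b => Eg * Yg ^ b)).prod

lemma wordOf_append (u v : List ℕ) (hu : u ≠ []) :
    wordOf (u ++ v) = wordOf u * (v.map (fun b => Eg * Yg ^ b)).prod := by
  obtain ⟨a, u', rfl⟩ : ∃ a u', u = a :: u' := by
    cases u with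
    | nil => exact absurd rfl hu
    | cons a u' => exact ⟨a, u', rfl⟩
  show wordOf (a :: (u' ++ v)) = _
  rw [wordOf, wordOf, List.map_append, List.prod_append, mul_assoc]

lemma mkM_wordOf_step (s : List ℕ) (hs : s ≠ []) (x : Fin 2) :
    mkM (wordOf (step s x).reverse) = mkM (wordOf s.reverse) * mkM (FreeMonoid.of x) := by
  obtain ⟨a, s', rfl⟩ : ∃ a s', s = a :: s' := by
    cases s with
    | nil => exact absurd rfl hs
    | cons a s' => exact ⟨a, s', rfl⟩
  rcases fin2 x with rfl | rfl
  · -- e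
    rw [step_e]
    split
    · rename_i hc
      obtain ⟨rfl, hs'⟩ := hc
      -- merge case: word stays, but we must absorb an extra e
      have hrev : (0 :: s').reverse = s'.reverse ++ [0] := by simp
      rw [hrev, wordOf_append _ _ (by simpa using hs')]
      have hpr : ((([0]:List ℕ).map fun b => Eg * Yg ^ b)).prod = Eg := by simp
      rw [hpr, map_mul, mul_assoc]
      show _ = _ * (mkM Eg * mkM Eg)
      rw [mkM_Eg_mul_Eg]
    · -- no merge: append a new zero block
      have hrev : (0 :: a :: s').reverse = (a :: s').reverse ++ [0] := by simp
      rw [hrev, wordOf_append _ _ (by simp)]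
      have hpr : ((([0]:List ℕ).map fun b => Eg * Yg ^ b)).prod = Eg := by simp
      rw [hpr, map_mul]
      rfl
  · -- y
    rw [step_y]
    rw [← map_mul]
    congr 1
    show wordOf (((a + 1) :: s').reverse) = wordOf ((a :: s').reverse) * Yg
    cases hs' : s'.reverse with
    | nil =>
      have : s' = [] := by simpa using hs'
      subst this
      show wordOf [a+1] = wordOf [a] * Yg
      rw [wordOf, wordOf]
      simp [pow_succ]
    | cons b u =>
      have h1 : ((a + 1) :: s').reverse = s'.reverse ++ [a+1] := by simp
      have h2 : (a :: s').reverse = s'.reverse ++ [a] := by simp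
      rw [h1, h2, wordOf_append _ _ (by simp [hs']), wordOf_append _ _ (by simp [hs'])]
      simp [pow_succ, mul_assoc]

lemma mkM_wordOf_nf (w : FM) : mkM (wordOf (nf w).reverse) = mkM w := by
  have main : ∀ l : List (Fin 2),
      mkM (wordOf (List.foldl step [0] l).reverse) = mkM (FreeMonoid.ofList l) := by
    intro l
    induction l using List.reverseRecOn with
    | nil =>
      show mkM (wordOf [0]) = mkM 1
      rw [wordOf]
      simp
    | append_singleton l x ih =>
      rw [List.foldl_append, List.foldl_cons, List.foldl_nil,
        mkM_wordOf_step _ (foldl_step_ne_nil _ _ (by simp)), ih]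
      rw [FreeMonoid.ofList_append, map_mul]
      rfl
  have := main w.toList
  rwa [FreeMonoid.ofList_toList] at this

lemma mkM_wordOf_rho (m : M) : mkM (wordOf (rho m).reverse) = m := by
  induction m using Con.induction_on with
  | H w => exact mkM_wordOf_nf w

lemma rho_injective : Function.Injective rho := by
  intro m m' h
  rw [← mkM_wordOf_rho m, ← mkM_wordOf_rho m', h]

end StmtAux
namespace StmtAux

/-- `l` has an internal block of size in `[1, n-1]` (i.e. the word contains `e y^i e`,
`1 ≤ i ≤ n-1`). -/
def BadL (n : ℕ) (l : List ℕ) : Prop :=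
  ∃ j, 0 < j ∧ j + 1 < l.length ∧ 0 < l.getD j 0 ∧ l.getD j 0 < n

def Bad (n : ℕ) (m : M) : Prop := BadL n (rho m)

lemma getD_oob (l : List ℕ) (k : ℕ) (h : l.length ≤ k) : l.getD k 0 = 0 := by
  rw [List.getD_eq_getElem?_getD, List.getElem?_eq_none (by omega)]
  rfl

lemma getD_dropLast (l : List ℕ) (k : ℕ) (h : k < l.length - 1) :
    l.dropLast.getD k 0 = l.getD k 0 := by
  rw [List.getD_eq_getElem _ _ (by simp; omega), List.getD_eq_getElem _ _ (by omega),
    List.getElem_dropLast]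

lemma dropLast_append_getLastD (l : List ℕ) (h : l ≠ []) :
    l.dropLast ++ [l.getLastD 0] = l := by
  rw [List.getLastD_eq_getLast?, List.getLast?_eq_getLast h]
  exact List.dropLast_append_getLast h

/-- Shape of `glueTail`. -/
lemma glueTail_shape (a : ℕ) (s' t : List ℕ) (ht : t ≠ []) :
    ∃ X, glueTail a s' t = t.dropLast ++ X ∧
      ((X = s' ∧ s' ≠ []) ∨ X = (t.getLastD 0 + a) :: s') := by
  induction t with
  | nil => exact absurd rfl ht
  | cons h t ih =>
    cases t with
    | nil =>
      rw [glueTail_singleton]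
      split
      · rename_i hc
        exact ⟨s', by simp, Or.inl ⟨rfl, hc.2.2⟩⟩
      · exact ⟨(h + a) :: s', by simp, Or.inr rfl⟩
    | cons g t₂ =>
      obtain ⟨X, hX, hOr⟩ := ih (by simp)
      refine ⟨X, ?_, ?_⟩
      · rw [glueTail_cons_cons, hX]
        simp
      · rcases hOr with h' | h'
        · exact Or.inl h'
        · right
          rw [h']
          simp
/-- Shape of `glue`. -/
lemma glue_shape (a : ℕ) (s' t : List ℕ) (ht : t ≠ []) :
    ∃ X, glue (a :: s') t = t.dropLast ++ X ∧
      ((X = s' ∧ s' ≠ [] ∧ 2 ≤ t.length) ∨ X = (t.getLastD 0 + a) :: s') := by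
  match t with
  | [c] => exact ⟨(c + a) :: s', by rw [glue_singleton]; simp, Or.inr rfl⟩
  | h :: g :: t₂ =>
    obtain ⟨X, hX, hOr⟩ := glueTail_shape a s' (g :: t₂) (by simp)
    refine ⟨X, ?_, ?_⟩
    · rw [glue_cons_cons, hX]; simp
    · rcases hOr with h' | h'
      · exact Or.inl ⟨h'.1, h'.2, by simp⟩
      · right; rw [h']; simp

lemma badL_glue_right (n : ℕ) (s t : List ℕ) (hs : s ≠ []) (ht : t ≠ [])
    (h : BadL n t) : BadL n (glue s t) := by
  obtain ⟨a, s', rfl⟩ : ∃ a s', s = a :: s' := by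
    cases s with
    | nil => exact absurd rfl hs
    | cons a s' => exact ⟨a, s', rfl⟩
  obtain ⟨X, hX, hOr⟩ := glue_shape a s' t ht
  obtain ⟨j, hj0, hjlen, hv1, hv2⟩ := h
  have hXne : X ≠ [] := by
    rcases hOr with ⟨rfl, h', h''⟩ | rfl
    · exact h'
    · simp
  refine ⟨j, hj0, ?_, ?_, ?_⟩
  · rw [hX]
    have : 1 ≤ X.length := List.length_pos_iff.mpr hXne
    simp only [List.length_append, List.length_dropLast]
    omega
  · rw [hX, List.getD_append _ _ _ _ (by simp only [List.length_dropLast]; omega),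
      getD_dropLast _ _ (by omega)]
    exact hv1
  · rw [hX, List.getD_append _ _ _ _ (by simp only [List.length_dropLast]; omega),
      getD_dropLast _ _ (by omega)]
    exact hv2

lemma badL_glue_left (n : ℕ) (s t : List ℕ) (hs : s ≠ []) (ht : t ≠ [])
    (h : BadL n s) : BadL n (glue s t) := by
  obtain ⟨a, s', rfl⟩ : ∃ a s', s = a :: s' := by
    cases s with
    | nil => exact absurd rfl hs
    | cons a s' => exact ⟨a, s', rfl⟩
  obtain ⟨X, hX, hOr⟩ := glue_shape a s' t ht
  obtain ⟨j, hj0, hjlen, hv1, hv2⟩ := h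
  obtain ⟨j', rfl⟩ : ∃ j', j = j' + 1 := ⟨j - 1, by omega⟩
  have hget : (a :: s').getD (j' + 1) 0 = s'.getD j' 0 := by simp
  have hj'len : j' + 1 < s'.length := by simpa using hjlen
  rw [hget] at hv1 hv2
  rcases hOr with ⟨hXeq, hne, htlen⟩ | rfl
  · -- merge case: X = s'
    subst hXeq
    have hidx : ∀ v : ℕ, (t.dropLast ++ X).getD (t.length - 1 + j') v
        = X.getD j' v := by
      intro v
      rw [List.getD_append_right _ _ _ _ (by simp only [List.length_dropLast]; omega)]
      congr 1
      simp only [List.length_dropLast]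
      omega
    refine ⟨t.length - 1 + j', by omega, ?_, ?_, ?_⟩
    · rw [hX]
      simp only [List.length_append, List.length_dropLast]
      omega
    · rw [hX, hidx]; exact hv1
    · rw [hX, hidx]; exact hv2
  · -- no-merge case
    have hidx : ∀ v : ℕ, (t.dropLast ++ (t.getLastD 0 + a) :: s').getD (t.length - 1 + (j' + 1)) v
        = s'.getD j' v := by
      intro v
      rw [List.getD_append_right _ _ _ _ (by simp only [List.length_dropLast]; omega)]
      have : t.length - 1 + (j' + 1) - t.dropLast.length = j' + 1 := by
        simp only [List.length_dropLast]; omega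
      rw [this]
      simp
    refine ⟨t.length - 1 + (j' + 1), by omega, ?_, ?_, ?_⟩
    · rw [hX]
      simp only [List.length_append, List.length_dropLast, List.length_cons]
      omega
    · rw [hX, hidx]; exact hv1
    · rw [hX, hidx]; exact hv2

end StmtAux
namespace StmtAux

lemma toList_Yg_pow (k : ℕ) : (Yg ^ k).toList = List.replicate k 1 := by
  induction k with
  | zero => rfl
  | succ k ih =>
    rw [pow_succ, FreeMonoid.toList_mul, ih]
    simp [Yg, List.replicate_succ']

lemma foldl_y_pow (k a : ℕ) (t : List ℕ) :
    List.foldl step (a :: t) (List.replicate k 1) = (a + k) :: t := by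
  induction k generalizing a with
  | zero => rfl
  | succ k ih =>
    rw [List.replicate_succ, List.foldl_cons, step_y, ih]
    congr 1
    omega

lemma nf_eYe (i : ℕ) (hi : 1 ≤ i) : nf (Eg * Yg ^ i * Eg) = [0, i, 0] := by
  rw [nf, FreeMonoid.toList_mul, FreeMonoid.toList_mul, toList_Yg_pow]
  show List.foldl step [0] (([0] : List (Fin 2)) ++ List.replicate i 1 ++ [0]) = _
  rw [List.foldl_append, List.foldl_append]
  have h1 : List.foldl step [0] ([0] : List (Fin 2)) = [0, 0] := by
    show step [0] 0 = [0, 0]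
    rw [step_e]
    simp
  rw [h1, foldl_y_pow]
  show step ((0 + i) :: [0]) 0 = _
  rw [step_e, if_neg (by rintro ⟨h1, -⟩; omega)]
  simp

lemma nf_yNeyN (N : ℕ) (hN : 1 ≤ N) : nf (Yg ^ N * Eg * Yg ^ N) = [N, N] := by
  rw [nf, FreeMonoid.toList_mul, FreeMonoid.toList_mul, toList_Yg_pow]
  show List.foldl step [0] (List.replicate N 1 ++ ([0] : List (Fin 2)) ++ List.replicate N 1) = _
  rw [List.foldl_append, List.foldl_append, foldl_y_pow, Nat.zero_add]
  have h1 : List.foldl step [N] ([0] : List (Fin 2)) = [0, N] := by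
    show step [N] 0 = _
    rw [step_e, if_neg (by rintro ⟨h1, -⟩; omega)]
  rw [h1, foldl_y_pow, Nat.zero_add]

lemma glue_NN (N a : ℕ) (hN : N ≠ 0) (s' : List ℕ) :
    glue (a :: s') [N, N] = N :: (N + a) :: s' := by
  rw [glue_cons_cons, glueTail_singleton, if_neg (by rintro ⟨-, h, -⟩; exact hN h)]

lemma glueTail_head_ne (a : ℕ) (s' t : List ℕ) (ha : a ≠ 0) (ht : t ≠ []) :
    glueTail a s' t = t.dropLast ++ (t.getLastD 0 + a) :: s' := by
  induction t with
  | nil => exact absurd rfl ht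
  | cons h t ih =>
    cases t with
    | nil =>
      rw [glueTail_singleton, if_neg (by rintro ⟨h1, -⟩; exact ha h1)]
      simp
    | cons g t₂ =>
      rw [glueTail_cons_cons, ih (by simp)]
      simp

lemma glue_head_ne (a : ℕ) (s' t : List ℕ) (ha : a ≠ 0) (ht : t ≠ []) :
    glue (a :: s') t = t.dropLast ++ (t.getLastD 0 + a) :: s' := by
  match t with
  | [c] => rw [glue_singleton]; simp
  | h :: g :: t₂ =>
    rw [glue_cons_cons, glueTail_head_ne a s' _ ha (by simp)]
    simp

/-- The normal form of `m * (y^N e y^N) * m'`, where `rho m = a :: s'` and `t = rho m'`. -/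
def Lform (t : List ℕ) (N a : ℕ) (s' : List ℕ) : List ℕ :=
  t.dropLast ++ (t.getLastD 0 + N) :: (N + a) :: s'

lemma rho_triple (N : ℕ) (hN : N ≠ 0) (m m' rhat : M) (hr : rho rhat = [N, N])
    {a : ℕ} {s' : List ℕ} (hm : rho m = a :: s') :
    rho (m * rhat * m') = Lform (rho m') N a s' := by
  rw [rho_mul, rho_mul, hm, hr, glue_NN N a hN, glue_head_ne N _ _ hN (rho_ne_nil m')]
  rfl

lemma Lform_length (t : List ℕ) (N a : ℕ) (s' : List ℕ) (ht : t ≠ []) :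
    (Lform t N a s').length = t.length + 1 + s'.length := by
  have : 1 ≤ t.length := List.length_pos_iff.mpr ht
  simp only [Lform, List.length_append, List.length_dropLast, List.length_cons]
  omega

lemma Lform_getD (t : List ℕ) (N a : ℕ) (s' : List ℕ) (ht : t ≠ []) (k : ℕ) :
    (Lform t N a s').getD k 0 =
      if k < t.length - 1 then t.getD k 0
      else if k = t.length - 1 then t.getLastD 0 + N
      else if k = t.length then N + a
      else s'.getD (k - t.length - 1) 0 := by
  have htl : 1 ≤ t.length := List.length_pos_iff.mpr ht
  rcases lt_or_ge k (t.length - 1) with hk | hk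
  · rw [if_pos hk, Lform, List.getD_append _ _ _ _ (by simp only [List.length_dropLast]; omega),
      getD_dropLast _ _ hk]
  · rw [if_neg (by omega), Lform,
      List.getD_append_right _ _ _ _ (by simp only [List.length_dropLast]; omega)]
    rcases Nat.eq_or_lt_of_le hk with hk1 | hk1
    · rw [if_pos hk1.symm]
      have : k - t.dropLast.length = 0 := by simp only [List.length_dropLast]; omega
      rw [this]
      rfl
    · rw [if_neg (by omega)]
      rcases Nat.eq_or_lt_of_le hk1 with hk2 | hk2
      · rw [if_pos (by omega)]
        have : k - t.dropLast.length = 1 := by simp only [List.length_dropLast]; omega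
        rw [this]
        rfl
      · rw [if_neg (by omega)]
        have : k - t.dropLast.length = (k - t.length - 1) + 2 := by
          simp only [List.length_dropLast]; omega
        rw [this]
        simp

lemma Lform_not_bad (n N : ℕ) (hNn : n ≤ N) (t : List ℕ) (a : ℕ) (s' : List ℕ)
    (ht : t ≠ []) (hgt : ¬ BadL n t) (hgs : ¬ BadL n (a :: s')) :
    ¬ BadL n (Lform t N a s') := by
  rintro ⟨j, hj0, hjlen, hv1, hv2⟩
  rw [Lform_length _ _ _ _ ht] at hjlen
  rw [Lform_getD _ _ _ _ ht] at hv1 hv2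
  have htl : 1 ≤ t.length := List.length_pos_iff.mpr ht
  rcases lt_or_ge j (t.length - 1) with hk | hk
  · rw [if_pos hk] at hv1 hv2
    exact hgt ⟨j, hj0, by omega, hv1, hv2⟩
  · rw [if_neg (by omega)] at hv1 hv2
    by_cases hk1 : j = t.length - 1
    · rw [if_pos hk1] at hv2
      omega
    · rw [if_neg hk1] at hv1 hv2
      by_cases hk2 : j = t.length
      · rw [if_pos hk2] at hv2
        omega
      · rw [if_neg hk2] at hv1 hv2
        have hjt : t.length < j := by omega
        have hidx : (a :: s').getD (j - t.length) 0 = s'.getD (j - t.length - 1) 0 := by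
          have h' : j - t.length = (j - t.length - 1) + 1 := by omega
          rw [h']
          simp
        refine hgs ⟨j - t.length, by omega, by simp only [List.length_cons]; omega, ?_, ?_⟩ <;>
          rw [hidx] <;> omega

/-- Injectivity of `Lform` given entry bounds. -/
lemma Lform_inj (N : ℕ) (t t₂ : List ℕ) (a a₂ : ℕ) (s' s₂' : List ℕ)
    (ht : t ≠ []) (ht₂ : t₂ ≠ [])
    (bt : ∀ k, t.getD k 0 < N) (bt₂ : ∀ k, t₂.getD k 0 < N)
    (bs : ∀ k, (a :: s').getD k 0 < N) (bs₂ : ∀ k, (a₂ :: s₂').getD k 0 < N)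
    (heq : Lform t N a s' = Lform t₂ N a₂ s₂') : t = t₂ ∧ a = a₂ ∧ s' = s₂' := by
  have htl : 1 ≤ t.length := List.length_pos_iff.mpr ht
  have htl₂ : 1 ≤ t₂.length := List.length_pos_iff.mpr ht₂
  have hlen : t.length + 1 + s'.length = t₂.length + 1 + s₂'.length := by
    rw [← Lform_length t N a s' ht, ← Lform_length t₂ N a₂ s₂' ht₂, heq]
  have hgetD : ∀ k, (Lform t N a s').getD k 0 = (Lform t₂ N a₂ s₂').getD k 0 := by
    intro k; rw [heq]
  -- first: the lengths of t and t₂ agree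
  have hL : t.length = t₂.length := by
    by_contra hne
    rcases Nat.lt_or_ge t.length t₂.length with hlt | hge
    · -- then position t.length - 1 of RHS is in dropLast t₂ if t.length - 1 < t₂.length - 1
      have h1 := hgetD (t.length - 1)
      rw [Lform_getD _ _ _ _ ht, Lform_getD _ _ _ _ ht₂, if_neg (by omega), if_pos rfl,
        if_pos (by omega)] at h1
      have := bt₂ (t.length - 1)
      omega
    · have hgt : t₂.length < t.length := by omega
      rcases Nat.eq_or_lt_of_le (Nat.succ_le_of_lt hgt) with he | hlt2
      · -- t.length = t₂.length + 1 : compare at position t.length = t₂.length + 1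
        have h1 := hgetD (t.length)
        rw [Lform_getD _ _ _ _ ht, Lform_getD _ _ _ _ ht₂, if_neg (by omega), if_neg (by omega),
          if_pos rfl, if_neg (by omega), if_neg (by omega), if_neg (by omega)] at h1
        have := bs₂ (t.length - t₂.length)
        have h2 : (a₂ :: s₂').getD (t.length - t₂.length) 0 = s₂'.getD (t.length - t₂.length - 1) 0 := by
          have : t.length - t₂.length = (t.length - t₂.length - 1) + 1 := by omega
          rw [this]
          simp
        omega
      · -- t.length ≥ t₂.length + 2 : compare at position t.length - 1 ≥ t₂.length + 1
        have h1 := hgetD (t.length - 1)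
        rw [Lform_getD _ _ _ _ ht, Lform_getD _ _ _ _ ht₂, if_neg (by omega), if_pos rfl,
          if_neg (by omega), if_neg (by omega), if_neg (by omega)] at h1
        have := bs₂ (t.length - 1 - t₂.length)
        have h2 : (a₂ :: s₂').getD (t.length - 1 - t₂.length) 0
            = s₂'.getD (t.length - 1 - t₂.length - 1) 0 := by
          have : t.length - 1 - t₂.length = (t.length - 1 - t₂.length - 1) + 1 := by omega
          rw [this]
          simp
        omega
  -- now split the append equality
  have hdl : t.dropLast.length = t₂.dropLast.length := by
    simp only [List.length_dropLast]; omega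
  simp only [Lform] at heq
  obtain ⟨hpre, hsuf⟩ := List.append_inj heq hdl
  obtain ⟨hc1, hc2, hc3⟩ : t.getLastD 0 + N = t₂.getLastD 0 + N ∧ N + a = N + a₂ ∧ s' = s₂' := by
    simpa using hsuf
  refine ⟨?_, by omega, hc3⟩
  rw [← dropLast_append_getLastD t ht, ← dropLast_append_getLastD t₂ ht₂, hpre]
  congr 2
  omega

end StmtAux
namespace StmtAux

variable (F : Type*) [Field F]

lemma Egen_sq : Egen F * Egen F = Egen F := by
  rw [Egen, ← map_mul]
  exact RingQuot.mkAlgHom_rel F (ERel.idem)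

lemma of_zero_eq_Eg : FreeMonoid.of (0 : Fin 2) = Eg := rfl
lemma of_one_eq_Yg : FreeMonoid.of (1 : Fin 2) = Yg := rfl

/-- The canonical map `R → F[M]`. -/
noncomputable def Phi : ERing F →ₐ[F] MonoidAlgebra F M :=
  RingQuot.liftAlgHom F
    ⟨FreeAlgebra.lift F (fun j => MonoidAlgebra.of F M (mkM (FreeMonoid.of j))), by
      rintro x y ⟨⟩
      rw [map_mul, FreeAlgebra.lift_ι_apply, ← map_mul, ← map_mul,
        of_zero_eq_Eg, mkM_ee]⟩

lemma Phi_Egen : Phi F (Egen F) = MonoidAlgebra.of F M (mkM Eg) := by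
  rw [Egen, Phi, RingQuot.liftAlgHom_mkAlgHom_apply, FreeAlgebra.lift_ι_apply, of_zero_eq_Eg]

lemma Phi_Ygen : Phi F (Ygen F) = MonoidAlgebra.of F M (mkM Yg) := by
  rw [Ygen, Phi, RingQuot.liftAlgHom_mkAlgHom_apply, FreeAlgebra.lift_ι_apply, of_one_eq_Yg]

/-- The evaluation of words in `R`. -/
noncomputable def h0 : FM →* ERing F :=
  FreeMonoid.lift (fun j => if j = 0 then Egen F else Ygen F)

lemma h0_Eg : h0 F Eg = Egen F := by
  rw [Eg, h0, FreeMonoid.lift_eval_of, if_pos rfl]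

lemma h0_Yg : h0 F Yg = Ygen F := by
  rw [Yg, h0, FreeMonoid.lift_eval_of, if_neg (by decide)]

lemma C_le_ker_h0 : C ≤ Con.ker (h0 F) := by
  apply Con.conGen_le.mpr
  rintro x y ⟨⟩
  rw [Con.ker_rel, map_mul, h0_Eg, Egen_sq]

/-- The evaluation map `M →* R`. -/
noncomputable def hM : M →* ERing F := Con.lift C (h0 F) (C_le_ker_h0 F)

lemma hM_mk (w : FM) : hM F (mkM w) = h0 F w := Con.lift_mk' _ _

/-- The inverse map `F[M] → R`. -/
noncomputable def Psi : MonoidAlgebra F M →ₐ[F] ERing F :=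
  MonoidAlgebra.lift F (ERing F) M (hM F)

lemma Psi_of (m : M) : Psi F (MonoidAlgebra.of F M m) = hM F m :=
  MonoidAlgebra.lift_of _ _

lemma Phi_h0 (w : FM) : Phi F (h0 F w) = MonoidAlgebra.of F M (mkM w) := by
  induction w using FreeMonoid.inductionOn with
  | one => rw [map_one, map_one, map_one, map_one]
  | of x =>
    rcases fin2 x with rfl | rfl
    · rw [of_zero_eq_Eg, h0_Eg, Phi_Egen]
    · rw [of_one_eq_Yg, h0_Yg, Phi_Ygen]
  | mul u v ihu ihv => rw [map_mul, map_mul, ihu, ihv, ← map_mul, ← map_mul]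

lemma Phi_Psi_comp : (Phi F).comp (Psi F) = AlgHom.id F (MonoidAlgebra F M) := by
  apply MonoidAlgebra.algHom_ext
  intro m
  induction m using Con.induction_on with
  | H w =>
    show Phi F (Psi F (MonoidAlgebra.of F M (mkM w))) = MonoidAlgebra.of F M (mkM w)
    rw [Psi_of, hM_mk, Phi_h0]
  exact Subsingleton.elim _ _

lemma Phi_Psi (x : MonoidAlgebra F M) : Phi F (Psi F x) = x :=
  AlgHom.congr_fun (Phi_Psi_comp F) x

lemma Psi_Phi_comp : (Psi F).comp (Phi F) = AlgHom.id F (ERing F) := by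
  apply RingQuot.ringQuot_ext'
  apply FreeAlgebra.hom_ext
  funext j
  show Psi F (Phi F (RingQuot.mkAlgHom F (ERel F) (FreeAlgebra.ι F j))) = _
  have h1 : Phi F (RingQuot.mkAlgHom F (ERel F) (FreeAlgebra.ι F j))
      = MonoidAlgebra.of F M (mkM (FreeMonoid.of j)) := by
    rw [Phi, RingQuot.liftAlgHom_mkAlgHom_apply, FreeAlgebra.lift_ι_apply]
  rw [h1, Psi_of, hM_mk]
  rcases fin2 j with rfl | rfl
  · rw [of_zero_eq_Eg, h0_Eg]; rfl
  · rw [of_one_eq_Yg, h0_Yg]; rfl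

lemma Psi_Phi (x : ERing F) : Psi F (Phi F x) = x :=
  AlgHom.congr_fun (Psi_Phi_comp F) x

end StmtAux
namespace StmtAux

open scoped Classical in
lemma Bad_mul_left (n : ℕ) (u m : M) (h : Bad n m) : Bad n (u * m) := by
  rw [Bad, rho_mul]
  exact badL_glue_right n _ _ (rho_ne_nil u) (rho_ne_nil m) h

lemma Bad_mul_right (n : ℕ) (m v : M) (h : Bad n m) : Bad n (m * v) := by
  rw [Bad, rho_mul]
  exact badL_glue_left n _ _ (rho_ne_nil m) (rho_ne_nil v) h

variable (F : Type*) [Field F]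

open Classical in
/-- The span of the bad monomials, as a two-sided ideal of `F[M]`. -/
noncomputable def Q (n : ℕ) : TwoSidedIdeal (MonoidAlgebra F M) :=
  TwoSidedIdeal.mk' {x | ∀ m ∈ x.coeff.support, Bad n m}
    (by intro m hm; simp at hm)
    (by
      intro x y hx hy m hm
      rcases Finset.mem_union.mp (Finsupp.support_add (g₁ := x.coeff) (g₂ := y.coeff) hm) with h | h
      · exact hx m h
      · exact hy m h)
    (by intro x hx m hm; exact hx m (by rwa [MonoidAlgebra.coeff_neg, Finsupp.support_neg] at hm))
    (by
      intro x y hy m hm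
      obtain ⟨m₁, hm₁, m₂, hm₂, rfl⟩ := Finset.mem_mul.mp (MonoidAlgebra.support_coeff_mul_subset x y hm)
      exact Bad_mul_left n m₁ m₂ (hy m₂ hm₂))
    (by
      intro x y hx m hm
      obtain ⟨m₁, hm₁, m₂, hm₂, rfl⟩ := Finset.mem_mul.mp (MonoidAlgebra.support_coeff_mul_subset x y hm)
      exact Bad_mul_right n m₁ m₂ (hx m₁ hm₁))

lemma mem_Q (n : ℕ) (x : MonoidAlgebra F M) :
    x ∈ Q F n ↔ ∀ m ∈ x.coeff.support, Bad n m := TwoSidedIdeal.mem_mk' _ _ _ _ _ _ x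

/-- Membership of the canonical generators. -/
lemma Phi_gen (i : ℕ) :
    Phi F (Egen F * Ygen F ^ i * Egen F) = MonoidAlgebra.of F M (mkM (Eg * Yg ^ i * Eg)) := by
  rw [map_mul, map_mul, map_pow, Phi_Egen, Phi_Ygen, ← map_pow, ← map_mul, ← map_mul,
    ← map_pow, ← map_mul, ← map_mul]

lemma Bad_gen (n i : ℕ) (h1 : 1 ≤ i) (h2 : i < n) : Bad n (mkM (Eg * Yg ^ i * Eg)) := by
  rw [Bad, rho_mk, nf_eYe i h1]
  exact ⟨1, one_pos, by simp, by simp; omega, by simpa using h2⟩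

/-- `Bad` monomials evaluate into `Pe`. -/
lemma hM_mem_Pe (n : ℕ) (hn : 1 ≤ n) (m : M) (h : Bad n m) : hM F m ∈ Pe F n := by
  obtain ⟨j, hj0, hjlen, hv1, hv2⟩ := h
  set l := rho m with hl
  -- decompose l = p ++ i :: q
  have hsplit : l = l.take j ++ l.getD j 0 :: l.drop (j + 1) := by
    rw [List.getD_eq_getElem _ _ (by omega), List.cons_getElem_drop_succ, List.take_append_drop]
  set i := l.getD j 0 with hi
  set p := l.take j with hp
  set q := l.drop (j + 1) with hq
  have hplen : p.length = j := List.length_take_of_le (by omega)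
  have hqne : q ≠ [] := by
    have : q.length = l.length - (j + 1) := List.length_drop
    intro hq0
    rw [hq0] at this
    simp at this
    omega
  have hpne : p ≠ [] := by
    intro hp0
    rw [hp0] at hplen
    simp at hplen
    omega
  -- the canonical word for m
  have hm : mkM (wordOf l.reverse) = m := mkM_wordOf_rho m
  have hrev : l.reverse = q.reverse ++ i :: p.reverse := by
    conv_lhs => rw [hsplit]
    rw [List.reverse_append, List.reverse_cons]
    simp
  obtain ⟨v0, v', hv⟩ : ∃ v0 v', p.reverse = v0 :: v' := by
    cases hpv : p.reverse with
    | nil => exact absurd (by simpa using hpv) hpne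
    | cons v0 v' => exact ⟨v0, v', rfl⟩
  have hword : wordOf l.reverse
      = wordOf q.reverse * ((Eg * Yg ^ i) * ((Eg * Yg ^ v0) * ((v'.map fun b => Eg * Yg ^ b)).prod)) := by
    rw [hrev, wordOf_append _ _ (by simpa using hqne), hv]
    rw [List.map_cons, List.prod_cons, List.map_cons, List.prod_cons]
  have key : hM F m = h0 F (wordOf q.reverse) * (Egen F * Ygen F ^ i * Egen F)
      * (Ygen F ^ v0 * h0 F ((v'.map fun b => Eg * Yg ^ b)).prod) := by
    rw [← hm, hM_mk, hword, map_mul, map_mul, map_mul, map_mul, map_mul, map_pow, map_pow,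
      h0_Eg, h0_Yg]
    simp only [mul_assoc]
  rw [key]
  have hgen : Egen F * Ygen F ^ i * Egen F ∈ Pe F n := by
    apply TwoSidedIdeal.subset_span
    exact ⟨i, by omega, by omega, rfl⟩
  exact TwoSidedIdeal.mul_mem_right _ _ _ (TwoSidedIdeal.mul_mem_left _ _ _ hgen)

lemma Psi_mem_Pe (n : ℕ) (hn : 1 ≤ n) (q : MonoidAlgebra F M)
    (hq : ∀ m ∈ q.coeff.support, Bad n m) : Psi F q ∈ Pe F n := by
  rw [Psi, MonoidAlgebra.lift_apply]
  apply TwoSidedIdeal.finsetSum_mem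
  intro m hm
  show q.coeff m • hM F m ∈ Pe F n
  rw [Algebra.smul_def]
  exact TwoSidedIdeal.mul_mem_left _ _ _ (hM_mem_Pe F n hn m (hq m hm))

lemma mem_Pe_iff (n : ℕ) (hn : 1 ≤ n) (x : ERing F) :
    x ∈ Pe F n ↔ Phi F x ∈ Q F n := by
  constructor
  · intro hx
    rw [Pe, TwoSidedIdeal.mem_span_iff] at hx
    have := hx ((Q F n).comap (Phi F)) ?_
    · rwa [TwoSidedIdeal.mem_comap] at this
    · rintro g ⟨i, hi1, hi2, rfl⟩
      rw [SetLike.mem_coe, TwoSidedIdeal.mem_comap, Phi_gen, mem_Q]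
      intro m hm
      have : m = mkM (Eg * Yg ^ i * Eg) := by
        simpa [MonoidAlgebra.of_apply] using Finsupp.support_single_subset hm
      rw [this]
      exact Bad_gen n i hi1 (by omega)
  · intro hx
    have := Psi_mem_Pe F n hn (Phi F x) ((mem_Q F n _).mp hx)
    rwa [Psi_Phi] at this

end StmtAux
namespace StmtAux

variable (F : Type*) [Field F]

open Classical in
lemma coeff_formula (A B : MonoidAlgebra F M) (x μ : M) :
    (A * MonoidAlgebra.of F M x * B).coeff μ
      = A.coeff.sum fun m c => B.coeff.sum fun m' c' => if m * x * m' = μ then c * c' else 0 := by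
  induction A using MonoidAlgebra.induction_linear with
  | zero => simp [Finsupp.sum_zero_index]
  | add f g hf hg =>
    rw [add_mul, add_mul, MonoidAlgebra.coeff_add, Finsupp.add_apply, hf, hg,
      MonoidAlgebra.coeff_add, Finsupp.sum_add_index']
    · intro m
      apply Finset.sum_eq_zero
      intro m' _
      dsimp only
      split <;> simp
    · intro m c1 c2
      rw [Finsupp.sum, Finsupp.sum, Finsupp.sum, ← Finset.sum_add_distrib]
      apply Finset.sum_congr rfl
      intro m' _
      split <;> ring
  | single m0 c0 =>
    have h1 : MonoidAlgebra.single m0 c0 * MonoidAlgebra.of F M x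
        = MonoidAlgebra.single (m0 * x) c0 := by
      rw [MonoidAlgebra.of_apply, MonoidAlgebra.single_mul_single, mul_one]
    rw [h1, MonoidAlgebra.coeff_single, Finsupp.sum_single_index
      (by apply Finset.sum_eq_zero; intro m' _; dsimp only; split <;> simp)]
    rw [MonoidAlgebra.coeff_mul, MonoidAlgebra.coeff_single, Finsupp.sum_single_index (by simp)]

open Classical in
lemma coeff_key (A B : MonoidAlgebra F M) (x μ ma mb : M)
    (hma : ma ∈ A.coeff.support) (hmb : mb ∈ B.coeff.support)
    (huniq : ∀ m ∈ A.coeff.support, ∀ m' ∈ B.coeff.support, m * x * m' = μ ↔ (m = ma ∧ m' = mb)) :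
    (A * MonoidAlgebra.of F M x * B).coeff μ = A.coeff ma * B.coeff mb := by
  rw [coeff_formula, Finsupp.sum]
  rw [Finset.sum_eq_single ma]
  · rw [Finsupp.sum, Finset.sum_eq_single mb]
    · rw [if_pos ((huniq ma hma mb hmb).mpr ⟨rfl, rfl⟩)]
    · intro m' hm' hne
      rw [if_neg (fun h => hne ((huniq ma hma m' hm').mp h).2)]
    · intro h
      exact absurd hmb h
  · intro m hm hne
    apply Finset.sum_eq_zero
    intro m' hm'
    dsimp only
    rw [if_neg (fun h => hne ((huniq m hm m' hm').mp h).1)]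
  · intro h
    exact absurd hma h

lemma getD_le_foldr_max (l : List ℕ) (k : ℕ) : l.getD k 0 ≤ l.foldr max 0 := by
  induction l generalizing k with
  | nil => simp
  | cons a t ih =>
    cases k with
    | zero => simpa using le_max_left a (t.foldr max 0)
    | succ k =>
      calc (a :: t).getD (k + 1) 0 = t.getD k 0 := by simp
      _ ≤ t.foldr max 0 := ih k
      _ ≤ (a :: t).foldr max 0 := by simpa using le_max_right a (t.foldr max 0)

theorem main (n : ℕ) (hn : 1 ≤ n) : IsPrimeTSI (Pe F n) := by
  classical
  constructor
  · -- Pe ≠ ⊤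
    intro htop
    have h1 : (1 : ERing F) ∈ Pe F n := htop ▸ TwoSidedIdeal.mem_top _
    rw [mem_Pe_iff F n hn, map_one, mem_Q] at h1
    have h2 : (1 : M) ∈ (1 : MonoidAlgebra F M).coeff.support := by
      rw [MonoidAlgebra.one_def]
      rw [MonoidAlgebra.coeff_single, Finsupp.support_single_ne_zero _ (one_ne_zero)]
      simp
    obtain ⟨j, hj0, hjlen, -, -⟩ := h1 1 h2
    have hrho1 : rho (1 : M) = [0] := by
      have h4 : (1 : M) = mkM 1 := (map_one mkM).symm
      rw [h4, rho_mk]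
      rfl
    rw [hrho1] at hjlen
    simp at hjlen
  · intro a b hab
    by_contra hcon
    push_neg at hcon
    obtain ⟨ha, hb⟩ := hcon
    rw [mem_Pe_iff F n hn, mem_Q] at ha hb
    push_neg at ha hb
    obtain ⟨ma, hma, hba⟩ := ha
    obtain ⟨mb, hmb, hbb⟩ := hb
    set S := (((Phi F a).coeff.support ∪ (Phi F b).coeff.support).sup (fun m => (rho m).foldr max 0)) with hS
    set N := n + 1 + S with hNdef
    have hNbound : ∀ m ∈ (Phi F a).coeff.support ∪ (Phi F b).coeff.support, ∀ k, (rho m).getD k 0 < N := by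
      intro m hm k
      have h1 := getD_le_foldr_max (rho m) k
      have h2 : (rho m).foldr max 0 ≤ S := by
        rw [hS]
        exact Finset.le_sup (f := fun m => (rho m).foldr max 0) hm
      omega
    have hN1 : 1 ≤ N := by omega
    set rhat := mkM (Yg ^ N * Eg * Yg ^ N) with hrhat
    have hrho_rhat : rho rhat = [N, N] := by
      rw [hrhat, rho_mk]
      exact nf_yNeyN N hN1
    set r := Psi F (MonoidAlgebra.of F M rhat) with hr
    have habr := hab r
    rw [mem_Pe_iff F n hn, map_mul, map_mul, hr, Phi_Psi, mem_Q] at habr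
    obtain ⟨a0, s', hrma⟩ : ∃ a0 s', rho ma = a0 :: s' := by
      cases hx : rho ma with
      | nil => exact absurd hx (rho_ne_nil ma)
      | cons a0 s' => exact ⟨a0, s', rfl⟩
    set μ := ma * rhat * mb with hμ
    have huniq : ∀ m ∈ (Phi F a).coeff.support, ∀ m' ∈ (Phi F b).coeff.support,
        m * rhat * m' = μ ↔ (m = ma ∧ m' = mb) := by
      intro m hm m' hm'
      constructor
      · intro heq
        obtain ⟨am, sm, hrm⟩ : ∃ am sm, rho m = am :: sm := by
          cases hx : rho m with
          | nil => exact absurd hx (rho_ne_nil m)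
          | cons am sm => exact ⟨am, sm, rfl⟩
        have e1 : rho (m * rhat * m') = Lform (rho m') N am sm :=
          rho_triple N (by omega) m m' rhat hrho_rhat hrm
        have e2 : rho μ = Lform (rho mb) N a0 s' :=
          rho_triple N (by omega) ma mb rhat hrho_rhat hrma
        have e3 : Lform (rho m') N am sm = Lform (rho mb) N a0 s' := by
          rw [← e1, ← e2, heq]
        obtain ⟨f1, f2, f3⟩ := Lform_inj N (rho m') (rho mb) am a0 sm s'
          (rho_ne_nil m') (rho_ne_nil mb)
          (fun k => hNbound m' (Finset.mem_union_right _ hm') k)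
          (fun k => hNbound mb (Finset.mem_union_right _ hmb) k)
          (fun k => hrm ▸ hNbound m (Finset.mem_union_left _ hm) k)
          (fun k => hrma ▸ hNbound ma (Finset.mem_union_left _ hma) k)
          e3
        constructor
        · apply rho_injective
          rw [hrm, hrma, f2, f3]
        · exact rho_injective f1
      · rintro ⟨rfl, rfl⟩
        rfl
    have hcoeff := coeff_key F (Phi F a) (Phi F b) rhat μ ma mb hma hmb huniq
    have hμsupp : μ ∈ (Phi F a * MonoidAlgebra.of F M rhat * Phi F b).coeff.support := by
      rw [Finsupp.mem_support_iff, hcoeff]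
      exact mul_ne_zero (Finsupp.mem_support_iff.mp hma) (Finsupp.mem_support_iff.mp hmb)
    have hbadμ := habr μ hμsupp
    have hgood : ¬ Bad n μ := by
      rw [Bad, hμ, rho_triple N (by omega) ma mb rhat hrho_rhat hrma]
      exact Lform_not_bad n N (by omega) (rho mb) a0 s' (rho_ne_nil mb) hbb (hrma ▸ hba)
    exact hgood hbadμ

end StmtAux

/-- For every `n ≥ 1`, the ideal `Pₙ = ⟨eye, ey²e, …, eyⁿ⁻¹e⟩` is a prime two-sided
ideal of `R = F⟨e,y⟩/(e² − e)`. -/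
theorem stmt_5 (F : Type*) [Field F] (n : ℕ) (hn : 1 ≤ n) :
    IsPrimeTSI (Pe F n) := StmtAux.main F n hn
end

section
/- Let F be a field, R = F⟨e,y⟩/(e² − e), and for n ≥ 1 let Pₙ = ⟨eye, ey²e, …, eyⁿ⁻¹e⟩. Let ē denote the image of e in R/Pₙ. Then the corner algebra ē·(R/Pₙ)·ē (a ring with identity element ē) is isomorphic as an F-algebra to the free associative F-algebra F⟨z₀, z₁, z₂, …⟩ on countably many generators, via an isomorphism sending the image of e·yᵐ·e to z_{m−n} for every m ≥ n. -/
/-- The quotient ring `R/Pₙ`. -/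
abbrev EQuot (F : Type*) [Field F] (n : ℕ) := (Pe F n).ringCon.Quotient

/-- The quotient map `R → R/Pₙ`. -/
noncomputable def Epi (F : Type*) [Field F] (n : ℕ) (a : ERing F) : EQuot F n :=
  (a : (Pe F n).ringCon.Quotient)

section aux
variable (F : Type*) [Field F] (n : ℕ)

lemma egen_idem : Egen F * Egen F = Egen F := by
  rw [Egen, ← map_mul]
  exact RingQuot.mkAlgHom_rel F ERel.idem

/-- the lift `z_k ↦ e y^{n+k} e` into `R` itself. -/
noncomputable def phi0 : FreeAlgebra F ℕ →ₐ[F] ERing F :=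
  FreeAlgebra.lift F fun k => Egen F * Ygen F ^ (n + k) * Egen F

lemma egen_comm_phi0 (u : FreeAlgebra F ℕ) :
    Egen F * phi0 F n u = phi0 F n u * Egen F := by
  induction u using FreeAlgebra.induction with
  | grade0 c => simp [Algebra.commutes]
  | grade1 k =>
      simp only [phi0, FreeAlgebra.lift_ι_apply]
      conv_lhs => rw [← mul_assoc, ← mul_assoc, egen_idem]
      conv_rhs => rw [mul_assoc, egen_idem]
  | mul u v hu hv => rw [map_mul, ← mul_assoc, hu, mul_assoc, hv, mul_assoc]
  | add u v hu hv => rw [map_add, mul_add, add_mul, hu, hv]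

/-- the module for the faithful-on-corner representation -/
abbrev EMod := ℕ →₀ FreeAlgebra F ℕ

noncomputable def gElt (j : ℕ) : FreeAlgebra F ℕ :=
  if j = 0 then 1 else if j < n then 0 else FreeAlgebra.ι F (j - n)

noncomputable def Emap : Module.End F (EMod F) :=
  Finsupp.lsum F fun j => (Finsupp.lsingle 0) ∘ₗ (LinearMap.mulLeft F (gElt F n j))

noncomputable def Ymap : Module.End F (EMod F) :=
  Finsupp.lmapDomain (FreeAlgebra F ℕ) F (· + 1)

lemma Emap_single (j : ℕ) (a : FreeAlgebra F ℕ) :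
    Emap F n (Finsupp.single j a) = Finsupp.single 0 (gElt F n j * a) := by
  simp [Emap]

lemma Ymap_single (j : ℕ) (a : FreeAlgebra F ℕ) :
    Ymap F (Finsupp.single j a) = Finsupp.single (j + 1) a := by
  simp [Ymap, Finsupp.mapDomain_single]

lemma Ymap_pow_single (i j : ℕ) (a : FreeAlgebra F ℕ) :
    (Ymap F ^ i) (Finsupp.single j a) = Finsupp.single (j + i) a := by
  induction i generalizing j with
  | zero => simp
  | succ i ih =>
      rw [pow_succ, Module.End.mul_apply, Ymap_single, ih, show j + 1 + i = j + (i + 1) by omega]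

lemma Emap_idem : Emap F n * Emap F n = Emap F n := by
  refine Finsupp.lhom_ext fun j a => ?_
  rw [Module.End.mul_apply, Emap_single, Emap_single]
  simp [gElt]

noncomputable def rho : ERing F →ₐ[F] Module.End F (EMod F) :=
  RingQuot.liftAlgHom F ⟨FreeAlgebra.lift F ![Emap F n, Ymap F], by
    rintro x y ⟨⟩
    simp only [map_mul, FreeAlgebra.lift_ι_apply, Matrix.cons_val_zero]
    exact Emap_idem F n⟩

end aux

section aux2
variable (F : Type*) [Field F] (n : ℕ)

lemma rho_egen : rho F n (Egen F) = Emap F n := by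
  rw [Egen, rho, RingQuot.liftAlgHom_mkAlgHom_apply]
  simp

lemma rho_ygen : rho F n (Ygen F) = Ymap F := by
  rw [Ygen, rho, RingQuot.liftAlgHom_mkAlgHom_apply]
  simp

lemma EYE_zero (i : ℕ) (h1 : 1 ≤ i) (h2 : i ≤ n - 1) :
    Emap F n * Ymap F ^ i * Emap F n = 0 := by
  have hn : 1 ≤ n := by omega
  refine Finsupp.lhom_ext fun j a => ?_
  rw [Module.End.mul_apply, Module.End.mul_apply, Emap_single, Ymap_pow_single, Emap_single]
  have hg : gElt F n (0 + i) = 0 := by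
    simp only [gElt, zero_add]
    rw [if_neg (by omega), if_pos (by omega)]
  rw [hg, zero_mul, Finsupp.single_zero, LinearMap.zero_apply]

lemma rho_pe (x : ERing F) (hx : x ∈ Pe F n) : rho F n x = 0 := by
  have : x ∈ TwoSidedIdeal.ker (rho F n) := by
    refine TwoSidedIdeal.mem_span_iff.mp hx _ ?_
    rintro m ⟨i, h1, h2, rfl⟩
    rw [SetLike.mem_coe, TwoSidedIdeal.mem_ker, map_mul, map_mul, map_pow,
      rho_egen, rho_ygen]
    exact EYE_zero F n i h1 h2
  exact (TwoSidedIdeal.mem_ker _).mp this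

noncomputable def phiS : FreeAlgebra F ℕ →ₐ[F] Module.End F (EMod F) :=
  FreeAlgebra.lift F fun k => Emap F n * Ymap F ^ (n + k) * Emap F n

lemma rho_phi0 (u : FreeAlgebra F ℕ) : rho F n (phi0 F n u) = phiS F n u := by
  have : (rho F n).comp (phi0 F n) = phiS F n := by
    apply FreeAlgebra.hom_ext; funext k
    simp only [Function.comp_apply, AlgHom.coe_comp, phi0, phiS, FreeAlgebra.lift_ι_apply,
      map_mul, map_pow, rho_egen, rho_ygen]
  rw [← this]; rfl

lemma phiS_single (hn : 1 ≤ n) (u : FreeAlgebra F ℕ) (a : FreeAlgebra F ℕ) :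
    phiS F n u (Finsupp.single 0 a) = Finsupp.single 0 (u * a) := by
  induction u using FreeAlgebra.induction generalizing a with
  | grade0 c =>
      rw [AlgHom.commutes, Module.algebraMap_end_apply, ← Algebra.smul_def,
        Finsupp.smul_single]
  | grade1 k =>
      rw [phiS, FreeAlgebra.lift_ι_apply, Module.End.mul_apply, Module.End.mul_apply,
        Emap_single, Ymap_pow_single, Emap_single]
      have h0 : gElt F n 0 = 1 := by simp [gElt]
      have h1 : gElt F n (0 + (n + k)) = FreeAlgebra.ι F k := by
        simp only [gElt, zero_add]
        rw [if_neg (by omega), if_neg (by omega)]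
        congr 1; omega
      rw [h0, one_mul, h1]
  | mul u v hu hv => rw [map_mul, Module.End.mul_apply, hv, hu, mul_assoc]
  | add u v hu hv => rw [map_add, LinearMap.add_apply, hu, hv, add_mul, Finsupp.single_add]

end aux2

section aux3
variable (F : Type*) [Field F] (n : ℕ)

lemma Epi_mul (a b : ERing F) : Epi F n (a * b) = Epi F n a * Epi F n b := rfl
lemma Epi_add (a b : ERing F) : Epi F n (a + b) = Epi F n a + Epi F n b := rfl
lemma Epi_one : Epi F n 1 = 1 := rfl
lemma Epi_zero : Epi F n 0 = 0 := rfl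
lemma Epi_smul (c : F) (a : ERing F) : Epi F n (c • a) = c • Epi F n a := rfl
lemma Epi_pow (a : ERing F) (i : ℕ) : Epi F n (a ^ i) = Epi F n a ^ i := by
  induction i with
  | zero => rfl
  | succ i ih => rw [pow_succ, pow_succ, ← ih]; rfl

lemma Epi_surjective : Function.Surjective (Epi F n) :=
  fun b => ⟨Quot.out b, Quot.out_eq b⟩

lemma Epi_eq_zero_of_mem {x : ERing F} (hx : x ∈ Pe F n) : Epi F n x = 0 := by
  have : (Pe F n).ringCon x 0 := by rw [TwoSidedIdeal.rel_iff]; simpa using hx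
  exact ((Pe F n).ringCon.eq).mpr this

lemma rho_eq_of_epi_eq {a b : ERing F} (h : Epi F n a = Epi F n b) :
    rho F n a = rho F n b := by
  have h1 : a - b ∈ Pe F n := ((Pe F n).rel_iff a b).mp (((Pe F n).ringCon.eq).mp h)
  have h2 := rho_pe F n _ h1
  rw [map_sub, sub_eq_zero] at h2
  exact h2

noncomputable def psi (u : FreeAlgebra F ℕ) : EQuot F n :=
  Epi F n (Egen F * phi0 F n u * Egen F)

lemma psi_add (u v : FreeAlgebra F ℕ) : psi F n (u + v) = psi F n u + psi F n v := by
  rw [psi, psi, psi, map_add, mul_add, add_mul, Epi_add]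

lemma psi_smul (c : F) (u : FreeAlgebra F ℕ) : psi F n (c • u) = c • psi F n u := by
  rw [psi, psi, map_smul, mul_smul_comm, smul_mul_assoc, Epi_smul]

lemma psi_mul (u v : FreeAlgebra F ℕ) : psi F n (u * v) = psi F n u * psi F n v := by
  rw [psi, psi, psi, ← Epi_mul]
  congr 1
  have key : Egen F * (phi0 F n v * Egen F) = phi0 F n v * Egen F := by
    rw [← mul_assoc, egen_comm_phi0, mul_assoc, egen_idem]
  simp only [map_mul, mul_assoc]
  rw [← mul_assoc (Egen F) (Egen F), egen_idem, key]

lemma psi_one : psi F n 1 = Epi F n (Egen F) := by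
  rw [psi, map_one, mul_one, egen_idem]

lemma psi_zero : psi F n 0 = 0 := by
  rw [psi, map_zero, mul_zero, zero_mul, Epi_zero]

lemma psi_gen (k : ℕ) : psi F n (FreeAlgebra.ι F k) =
    Epi F n (Egen F * Ygen F ^ (n + k) * Egen F) := by
  rw [psi, phi0, FreeAlgebra.lift_ι_apply]
  congr 1
  simp only [← mul_assoc, egen_idem]
  rw [mul_assoc, egen_idem]

lemma psi_injective (hn : 1 ≤ n) : Function.Injective (psi F n) := by
  intro u v h
  have h2 := rho_eq_of_epi_eq F n h
  simp only [map_mul, rho_egen, rho_phi0] at h2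
  have h3 := congrArg (fun f : Module.End F (EMod F) => f (Finsupp.single 0 1)) h2
  simp only [Module.End.mul_apply, Emap_single] at h3
  have h0 : gElt F n 0 = 1 := by simp [gElt]
  rw [h0, one_mul, phiS_single F n hn, phiS_single F n hn, Emap_single, Emap_single,
    h0, one_mul, one_mul, mul_one, mul_one] at h3
  exact Finsupp.single_injective 0 h3

end aux3

section aux4
variable (F : Type*) [Field F] (n : ℕ)

lemma psi_corner (hn : 1 ≤ n) (b : EQuot F n) :
    Epi F n (Egen F) * b * Epi F n (Egen F) ∈ Set.range (psi F n) := by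
  set E' := Epi F n (Egen F) with hE'
  set Y' := Epi F n (Ygen F) with hY'
  set V : Set (EQuot F n) := Set.range (psi F n) with hV
  have hEv : ∀ v ∈ V, E' * v = v := by
    rintro v ⟨u, rfl⟩
    rw [psi, hE', ← Epi_mul]; congr 1
    rw [← mul_assoc, ← mul_assoc, egen_idem]
  have hVadd : ∀ v ∈ V, ∀ w ∈ V, v + w ∈ V := by
    rintro v ⟨u, rfl⟩ w ⟨u', rfl⟩; exact ⟨u + u', psi_add F n u u'⟩
  have hVmul : ∀ v ∈ V, ∀ w ∈ V, v * w ∈ V := by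
    rintro v ⟨u, rfl⟩ w ⟨u', rfl⟩; exact ⟨u * u', psi_mul F n u u'⟩
  have hVsmul : ∀ (c : F), ∀ v ∈ V, c • v ∈ V := by
    rintro c v ⟨u, rfl⟩; exact ⟨c • u, psi_smul F n c u⟩
  have hV0 : (0 : EQuot F n) ∈ V := ⟨0, psi_zero F n⟩
  have hgen : ∀ i : ℕ, E' * Y' ^ i * E' ∈ V := by
    intro i
    have hei : E' * Y' ^ i * E' = Epi F n (Egen F * Ygen F ^ i * Egen F) := by
      rw [hE', hY', ← Epi_pow, ← Epi_mul, ← Epi_mul]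
    rw [hei]
    rcases Nat.lt_or_ge i 1 with h | h
    · refine ⟨1, ?_⟩
      rw [psi_one]; congr 1
      interval_cases i
      rw [pow_zero, mul_one, egen_idem]
    · rcases Nat.lt_or_ge i n with h2 | h2
      · refine ⟨0, ?_⟩
        rw [psi_zero]
        exact (Epi_eq_zero_of_mem F n (TwoSidedIdeal.subset_span ⟨i, h, by omega, rfl⟩)).symm
      · refine ⟨FreeAlgebra.ι F (i - n), ?_⟩
        rw [psi_gen, show n + (i - n) = i by omega]
  set Ngen : Set (EQuot F n) := {x | ∃ j : ℕ, ∃ v ∈ V, x = Y' ^ j * v} with hNgen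
  set N := AddSubmonoid.closure Ngen with hN
  have hVN : V ⊆ N := fun v hv =>
    AddSubmonoid.subset_closure ⟨0, v, hv, by rw [pow_zero, one_mul]⟩
  have hNE : ∀ x ∈ N, E' * x ∈ V := by
    intro x hx
    induction hx using AddSubmonoid.closure_induction with
    | mem x hx =>
        obtain ⟨j, v, hv, rfl⟩ := hx
        have : E' * (Y' ^ j * v) = (E' * Y' ^ j * E') * v := by
          conv_lhs => rw [← hEv v hv]
          rw [← mul_assoc, ← mul_assoc]
        rw [this]
        exact hVmul _ (hgen j) _ hv
    | zero => rw [mul_zero]; exact hV0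
    | add x y hx hy ihx ihy => rw [mul_add]; exact hVadd _ ihx _ ihy
  have hNY : ∀ x ∈ N, Y' * x ∈ N := by
    intro x hx
    induction hx using AddSubmonoid.closure_induction with
    | mem x hx =>
        obtain ⟨j, v, hv, rfl⟩ := hx
        exact AddSubmonoid.subset_closure ⟨j + 1, v, hv, by rw [pow_succ']; rw [mul_assoc]⟩
    | zero => rw [mul_zero]; exact zero_mem _
    | add x y hx hy ihx ihy => rw [mul_add]; exact add_mem ihx ihy
  have hNE' : ∀ x ∈ N, E' * x ∈ N := fun x hx => hVN (hNE x hx)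
  have hNsmul : ∀ (c : F), ∀ x ∈ N, c • x ∈ N := by
    intro c x hx
    induction hx using AddSubmonoid.closure_induction with
    | mem x hx =>
        obtain ⟨j, v, hv, rfl⟩ := hx
        exact AddSubmonoid.subset_closure ⟨j, c • v, hVsmul c v hv, (mul_smul_comm c _ v).symm⟩
    | zero => rw [smul_zero]; exact zero_mem _
    | add x y hx hy ihx ihy => rw [smul_add]; exact add_mem ihx ihy
  set T : Set (EQuot F n) := {x | x * E' ∈ N} with hT
  have hT1 : (1 : EQuot F n) ∈ T := by
    show 1 * E' ∈ N
    rw [one_mul]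
    exact hVN ⟨1, psi_one F n⟩
  have hTE : ∀ x ∈ T, E' * x ∈ T := fun x hx => by
    show E' * x * E' ∈ N
    rw [mul_assoc]
    exact hNE' _ hx
  have hTY : ∀ x ∈ T, Y' * x ∈ T := fun x hx => by
    show Y' * x * E' ∈ N
    rw [mul_assoc]
    exact hNY _ hx
  have hTadd : ∀ x ∈ T, ∀ y ∈ T, x + y ∈ T := fun x hx y hy => by
    show (x + y) * E' ∈ N
    rw [add_mul]
    exact add_mem hx hy
  have hTsmul : ∀ (c : F), ∀ x ∈ T, c • x ∈ T := fun c x hx => by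
    show (c • x) * E' ∈ N
    rw [smul_mul_assoc]
    exact hNsmul c _ hx
  have hT' : ∀ w : FreeAlgebra F (Fin 2),
      ∀ x ∈ T, Epi F n (RingQuot.mkAlgHom F (ERel F) w) * x ∈ T := by
    intro w
    induction w using FreeAlgebra.induction with
    | grade0 c =>
        intro x hx
        have : Epi F n (RingQuot.mkAlgHom F (ERel F) (algebraMap F _ c)) * x = c • x := by
          rw [AlgHom.commutes, Algebra.algebraMap_eq_smul_one, Epi_smul, Epi_one,
            smul_mul_assoc, one_mul]
        rw [this]
        exact hTsmul c x hx
    | grade1 i =>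
        fin_cases i
        · exact fun x hx => hTE x hx
        · exact fun x hx => hTY x hx
    | mul a b ha hb =>
        intro x hx
        rw [map_mul, Epi_mul, mul_assoc]
        exact ha _ (hb x hx)
    | add a b ha hb =>
        intro x hx
        rw [map_add, Epi_add, add_mul]
        exact hTadd _ (ha x hx) _ (hb x hx)
  have hbT : b ∈ T := by
    obtain ⟨r, rfl⟩ := Epi_surjective F n b
    obtain ⟨w, rfl⟩ := RingQuot.mkAlgHom_surjective F (ERel F) r
    have := hT' w 1 hT1
    rwa [mul_one] at this
  have hfin := hNE _ hbT
  rwa [← mul_assoc] at hfin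

end aux4

/-- For `n ≥ 1`, the corner algebra `ē (R/Pₙ) ē` (with identity `ē`, the image of `e`)
is isomorphic as an `F`-algebra to the free algebra `F⟨z₀, z₁, …⟩` on countably many
generators, with the image of `e yᵐ e` corresponding to `z_{m-n}` for all `m ≥ n`.
The isomorphism is presented as a bijection `ψ` from the free algebra onto the corner,
preserving addition, multiplication and scalars, with `ψ 1 = ē` and
`ψ(z_{m-n}) = ` image of `e yᵐ e`. -/
theorem stmt_6 (F : Type*) [Field F] (n : ℕ) (hn : 1 ≤ n) :
    ∃ ψ : FreeAlgebra F ℕ → EQuot F n,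
      Function.Injective ψ ∧
      Set.range ψ = {a : EQuot F n | ∃ b : EQuot F n,
        a = Epi F n (Egen F) * b * Epi F n (Egen F)} ∧
      (∀ u v : FreeAlgebra F ℕ, ψ (u + v) = ψ u + ψ v) ∧
      (∀ u v : FreeAlgebra F ℕ, ψ (u * v) = ψ u * ψ v) ∧
      (∀ (c : F) (u : FreeAlgebra F ℕ), ψ (c • u) = c • ψ u) ∧
      ψ 1 = Epi F n (Egen F) ∧
      (∀ m : ℕ, n ≤ m →
        ψ (FreeAlgebra.ι F (m - n)) = Epi F n (Egen F * (Ygen F) ^ m * Egen F)) := by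
  refine ⟨psi F n, psi_injective F n hn, ?_, psi_add F n, psi_mul F n, psi_smul F n,
    psi_one F n, ?_⟩
  · ext a
    constructor
    · rintro ⟨u, rfl⟩
      exact ⟨Epi F n (phi0 F n u), by rw [psi, Epi_mul, Epi_mul]⟩
    · rintro ⟨b, rfl⟩
      exact psi_corner F n hn b
  · intro m hm
    rw [psi_gen, show n + (m - n) = m by omega]
end

section
/- Let F be a field, R = F⟨e,y⟩/(e² − e), and for n ≥ 1 let Pₙ = ⟨eye, ey²e, …, eyⁿ⁻¹e⟩. Then P₁ ⊆ P₂ ⊆ ⋯ is an ascending chain of two-sided ideals and the union ⋃ₙ Pₙ equals R·e·R·y·e·R; this union is not semiprime: it contains (R·e·y·R)² but does not contain e·y. -/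
/-- The product of two two-sided ideals: the two-sided ideal generated by
products `a * b` with `a ∈ I`, `b ∈ J`. -/
def mulTSI {R : Type*} [Ring R] (I J : TwoSidedIdeal R) : TwoSidedIdeal R :=
  TwoSidedIdeal.span {z | ∃ a ∈ I, ∃ b ∈ J, z = a * b}

/-- The union of the chain `P₁ ⊆ P₂ ⊆ ⋯` (as a set). -/
noncomputable def UPe (F : Type*) [Field F] : Set (ERing F) :=
  ⋃ n : ℕ, ⋃ (_ : 1 ≤ n), (Pe F n : Set (ERing F))

section Aux

variable (F : Type*) [Field F]

lemma pe_mono : Monotone (Pe F) := by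
  intro m n h
  apply TwoSidedIdeal.span_mono
  rintro x ⟨i, h1, h2, h3⟩
  exact ⟨i, h1, h2.trans (Nat.sub_le_sub_right h 1), h3⟩

lemma mem_UPe {x : ERing F} : x ∈ UPe F ↔ ∃ n, 1 ≤ n ∧ x ∈ Pe F n := by
  simp [UPe]

/-- The union of the chain, as a two-sided ideal. -/
noncomputable def Ut : TwoSidedIdeal (ERing F) :=
  TwoSidedIdeal.mk' (UPe F)
    ((mem_UPe F).2 ⟨1, le_refl 1, (Pe F 1).zero_mem⟩)
    (by
      rintro x y hx hy
      rw [mem_UPe] at hx hy ⊢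
      obtain ⟨m, hm, hx⟩ := hx
      obtain ⟨n, hn, hy⟩ := hy
      exact ⟨max m n, hm.trans (le_max_left m n),
        (Pe F _).add_mem (pe_mono F (le_max_left m n) hx)
          (pe_mono F (le_max_right m n) hy)⟩)
    (by
      rintro x hx
      rw [mem_UPe] at hx ⊢
      obtain ⟨n, hn, hx⟩ := hx
      exact ⟨n, hn, (Pe F n).neg_mem hx⟩)
    (by
      rintro x y hy
      rw [mem_UPe] at hy ⊢
      obtain ⟨n, hn, hy⟩ := hy
      exact ⟨n, hn, (Pe F n).mul_mem_left _ _ hy⟩)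
    (by
      rintro x y hx
      rw [mem_UPe] at hx ⊢
      obtain ⟨n, hn, hx⟩ := hx
      exact ⟨n, hn, (Pe F n).mul_mem_right _ _ hx⟩)

lemma mem_Ut {x : ERing F} : x ∈ Ut F ↔ x ∈ UPe F :=
  TwoSidedIdeal.mem_mk' _ _ _ _ _ _ x

lemma eyke_mem {k : ℕ} (hk : 1 ≤ k) : Egen F * Ygen F ^ k * Egen F ∈ Ut F := by
  rw [mem_Ut, mem_UPe]
  exact ⟨k + 1, by omega, TwoSidedIdeal.subset_span ⟨k, hk, by omega, rfl⟩⟩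

lemma ut_smul (c : F) {x : ERing F} (hx : x ∈ Ut F) : c • x ∈ Ut F := by
  rw [Algebra.smul_def]
  exact (Ut F).mul_mem_left _ _ hx

/-- Auxiliary submodule: `U + span{yᵐe : m ≥ 1}`. -/
noncomputable def MA : Submodule F (ERing F) :=
  Submodule.span F ((Ut F : Set (ERing F)) ∪ {x | ∃ m, 1 ≤ m ∧ x = Ygen F ^ m * Egen F})

lemma ut_subset_MA {x : ERing F} (hx : x ∈ Ut F) : x ∈ MA F :=
  Submodule.subset_span (Or.inl hx)

lemma gen_mem_MA {m : ℕ} (hm : 1 ≤ m) : Ygen F ^ m * Egen F ∈ MA F :=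
  Submodule.subset_span (Or.inr ⟨m, hm, rfl⟩)

lemma mul_MA {s : ERing F} (hs : ∀ k, 1 ≤ k → s * (Ygen F ^ k * Egen F) ∈ MA F)
    {x : ERing F} (hx : x ∈ MA F) : s * x ∈ MA F := by
  induction hx using Submodule.span_induction with
  | mem x h =>
    rcases h with h | ⟨m, hm, rfl⟩
    · exact ut_subset_MA F ((Ut F).mul_mem_left _ _ h)
    · exact hs m hm
  | zero => rw [mul_zero]; exact (MA F).zero_mem
  | add a b _ _ ha hb => rw [mul_add]; exact (MA F).add_mem ha hb
  | smul c a _ ha => rw [mul_smul_comm]; exact (MA F).smul_mem c ha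

lemma lemA (t : ERing F) : ∀ k, 1 ≤ k → t * (Ygen F ^ k * Egen F) ∈ MA F := by
  obtain ⟨a, rfl⟩ := RingQuot.mkAlgHom_surjective F (ERel F) t
  induction a using FreeAlgebra.induction with
  | grade0 r =>
    intro k hk
    rw [AlgHom.commutes, ← Algebra.smul_def]
    exact (MA F).smul_mem r (gen_mem_MA F hk)
  | grade1 x =>
    intro k hk
    fin_cases x
    · show Egen F * (Ygen F ^ k * Egen F) ∈ MA F
      rw [← mul_assoc]
      exact ut_subset_MA F (eyke_mem F hk)
    · show Ygen F * (Ygen F ^ k * Egen F) ∈ MA F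
      rw [← mul_assoc, ← pow_succ']
      exact gen_mem_MA F (by omega)
  | mul a b ha hb =>
    intro k hk
    rw [map_mul, mul_assoc]
    exact mul_MA F ha (hb k hk)
  | add a b ha hb =>
    intro k hk
    rw [map_add, add_mul]
    exact (MA F).add_mem (ha k hk) (hb k hk)

lemma e_mul_MA {x : ERing F} (hx : x ∈ MA F) : Egen F * x ∈ Ut F := by
  induction hx using Submodule.span_induction with
  | mem x h =>
    rcases h with h | ⟨m, hm, rfl⟩
    · exact (Ut F).mul_mem_left _ _ h
    · have := eyke_mem F hm
      rwa [mul_assoc] at this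
  | zero => rw [mul_zero]; exact (Ut F).zero_mem
  | add a b _ _ ha hb => rw [mul_add]; exact (Ut F).add_mem ha hb
  | smul c a _ ha => rw [mul_smul_comm]; exact ut_smul F c ha

lemma esye (s : ERing F) {k : ℕ} (hk : 1 ≤ k) :
    Egen F * (s * (Ygen F ^ k * Egen F)) ∈ Ut F :=
  e_mul_MA F (lemA F s k hk)

/-- Mirror auxiliary submodule: `U + span{eyᵐ : m ≥ 1}`. -/
noncomputable def MB : Submodule F (ERing F) :=
  Submodule.span F ((Ut F : Set (ERing F)) ∪ {x | ∃ m, 1 ≤ m ∧ x = Egen F * Ygen F ^ m})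

lemma ut_subset_MB {x : ERing F} (hx : x ∈ Ut F) : x ∈ MB F :=
  Submodule.subset_span (Or.inl hx)

lemma gen_mem_MB {m : ℕ} (hm : 1 ≤ m) : Egen F * Ygen F ^ m ∈ MB F :=
  Submodule.subset_span (Or.inr ⟨m, hm, rfl⟩)

lemma MB_mul {s : ERing F} (hs : ∀ k, 1 ≤ k → Egen F * Ygen F ^ k * s ∈ MB F)
    {x : ERing F} (hx : x ∈ MB F) : x * s ∈ MB F := by
  induction hx using Submodule.span_induction with
  | mem x h =>
    rcases h with h | ⟨m, hm, rfl⟩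
    · exact ut_subset_MB F ((Ut F).mul_mem_right _ _ h)
    · exact hs m hm
  | zero => rw [zero_mul]; exact (MB F).zero_mem
  | add a b _ _ ha hb => rw [add_mul]; exact (MB F).add_mem ha hb
  | smul c a _ ha => rw [smul_mul_assoc]; exact (MB F).smul_mem c ha

lemma lemB (t : ERing F) : ∀ k, 1 ≤ k → Egen F * Ygen F ^ k * t ∈ MB F := by
  obtain ⟨a, rfl⟩ := RingQuot.mkAlgHom_surjective F (ERel F) t
  induction a using FreeAlgebra.induction with
  | grade0 r =>
    intro k hk
    rw [AlgHom.commutes, ← Algebra.commutes, ← Algebra.smul_def]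
    exact (MB F).smul_mem r (gen_mem_MB F hk)
  | grade1 x =>
    intro k hk
    fin_cases x
    · show Egen F * Ygen F ^ k * Egen F ∈ MB F
      exact ut_subset_MB F (eyke_mem F hk)
    · show Egen F * Ygen F ^ k * Ygen F ∈ MB F
      rw [mul_assoc, ← pow_succ]
      exact gen_mem_MB F (by omega)
  | mul a b ha hb =>
    intro k hk
    rw [map_mul, ← mul_assoc]
    exact MB_mul F hb (ha k hk)
  | add a b ha hb =>
    intro k hk
    rw [map_add, mul_add]
    exact (MB F).add_mem (ha k hk) (hb k hk)

lemma MB_mul_e {x : ERing F} (hx : x ∈ MB F) : x * Egen F ∈ Ut F := by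
  induction hx using Submodule.span_induction with
  | mem x h =>
    rcases h with h | ⟨m, hm, rfl⟩
    · exact (Ut F).mul_mem_right _ _ h
    · exact eyke_mem F hm
  | zero => rw [zero_mul]; exact (Ut F).zero_mem
  | add a b _ _ ha hb => rw [add_mul]; exact (Ut F).add_mem ha hb
  | smul c a _ ha => rw [smul_mul_assoc]; exact ut_smul F c ha

lemma eyse (s : ERing F) : Egen F * Ygen F * s * Egen F ∈ Ut F := by
  have h := lemB F s 1 le_rfl
  rw [pow_one] at h
  exact MB_mul_e F h

lemma e_mul_span_ye {b : ERing F} (hb : b ∈ TwoSidedIdeal.span {Ygen F * Egen F}) :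
    Egen F * b ∈ Ut F := by
  rw [TwoSidedIdeal.mem_span_iff] at hb
  have key := hb (TwoSidedIdeal.mk' {b | ∀ r : ERing F, Egen F * (r * b) ∈ Ut F}
    (by intro r; rw [mul_zero, mul_zero]; exact (Ut F).zero_mem)
    (by intro x y hx hy r; rw [mul_add, mul_add]; exact (Ut F).add_mem (hx r) (hy r))
    (by
      intro x hx r
      have e1 : Egen F * (r * -x) = -(Egen F * (r * x)) :=
        (congrArg (Egen F * ·) (mul_neg r x)).trans (mul_neg _ _)
      rw [e1]; exact (Ut F).neg_mem (hx r))
    (by intro x y hy r; rw [← mul_assoc r x y]; exact hy (r * x))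
    (by
      intro x y hx r
      have h1 : Egen F * (r * (x * y)) = Egen F * (r * x) * y := by
        simp only [mul_assoc]
      rw [h1]
      exact (Ut F).mul_mem_right _ _ (hx r)))
    (by
      rintro z hz
      rw [Set.mem_singleton_iff] at hz
      subst hz
      rw [SetLike.mem_coe, TwoSidedIdeal.mem_mk']
      intro r
      have := esye F r (le_refl 1)
      rwa [pow_one] at this)
  rw [TwoSidedIdeal.mem_mk'] at key
  have := key 1
  rwa [one_mul] at this

lemma span_e_mul {a b : ERing F} (ha : a ∈ TwoSidedIdeal.span {Egen F})
    (hb : b ∈ TwoSidedIdeal.span {Ygen F * Egen F}) : a * b ∈ Ut F := by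
  rw [TwoSidedIdeal.mem_span_iff] at ha
  have key := ha (TwoSidedIdeal.mk'
      {x | ∀ b' ∈ TwoSidedIdeal.span {Ygen F * Egen F}, x * b' ∈ Ut F}
    (by intro b' hb'; rw [zero_mul]; exact (Ut F).zero_mem)
    (by intro x y hx hy b' hb'; rw [add_mul]; exact (Ut F).add_mem (hx b' hb') (hy b' hb'))
    (by
      intro x hx b' hb'
      have e1 : -x * b' = -(x * b') := neg_mul x b'
      rw [e1]; exact (Ut F).neg_mem (hx b' hb'))
    (by
      intro x y hy b' hb'
      rw [mul_assoc]
      exact (Ut F).mul_mem_left _ _ (hy b' hb'))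
    (by
      intro x y hx b' hb'
      rw [mul_assoc]
      exact hx (y * b') ((TwoSidedIdeal.span _).mul_mem_left _ _ hb')))
    (by
      rintro z hz
      rw [Set.mem_singleton_iff] at hz
      subst hz
      rw [SetLike.mem_coe, TwoSidedIdeal.mem_mk']
      intro b' hb'
      exact e_mul_span_ye F hb')
  rw [TwoSidedIdeal.mem_mk'] at key
  exact key b hb

lemma ey_mul_span_ey {b : ERing F} (hb : b ∈ TwoSidedIdeal.span {Egen F * Ygen F}) :
    Egen F * Ygen F * b ∈ Ut F := by
  rw [TwoSidedIdeal.mem_span_iff] at hb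
  have key := hb (TwoSidedIdeal.mk'
      {b | ∀ r : ERing F, Egen F * Ygen F * (r * b) ∈ Ut F}
    (by intro r; rw [mul_zero, mul_zero]; exact (Ut F).zero_mem)
    (by intro x y hx hy r; rw [mul_add, mul_add]; exact (Ut F).add_mem (hx r) (hy r))
    (by
      intro x hx r
      have e1 : Egen F * Ygen F * (r * -x) = -(Egen F * Ygen F * (r * x)) :=
        (congrArg (Egen F * Ygen F * ·) (mul_neg r x)).trans (mul_neg _ _)
      rw [e1]; exact (Ut F).neg_mem (hx r))
    (by intro x y hy r; rw [← mul_assoc r]; exact hy (r * x))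
    (by
      intro x y hx r
      have h1 : Egen F * Ygen F * (r * (x * y)) = Egen F * Ygen F * (r * x) * y := by
        simp only [mul_assoc]
      rw [h1]
      exact (Ut F).mul_mem_right _ _ (hx r)))
    (by
      rintro z hz
      rw [Set.mem_singleton_iff] at hz
      subst hz
      rw [SetLike.mem_coe, TwoSidedIdeal.mem_mk']
      intro r
      have h2 : Egen F * Ygen F * (r * (Egen F * Ygen F)) =
          Egen F * Ygen F * r * Egen F * Ygen F := by
        simp only [mul_assoc]
      rw [h2]
      exact (Ut F).mul_mem_right _ _ (eyse F r))
  rw [TwoSidedIdeal.mem_mk'] at key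
  have := key 1
  rwa [one_mul] at this

lemma span_ey_mul {a b : ERing F} (ha : a ∈ TwoSidedIdeal.span {Egen F * Ygen F})
    (hb : b ∈ TwoSidedIdeal.span {Egen F * Ygen F}) : a * b ∈ Ut F := by
  rw [TwoSidedIdeal.mem_span_iff] at ha
  have key := ha (TwoSidedIdeal.mk'
      {x | ∀ b' ∈ TwoSidedIdeal.span {Egen F * Ygen F}, x * b' ∈ Ut F}
    (by intro b' hb'; rw [zero_mul]; exact (Ut F).zero_mem)
    (by intro x y hx hy b' hb'; rw [add_mul]; exact (Ut F).add_mem (hx b' hb') (hy b' hb'))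
    (by
      intro x hx b' hb'
      have e1 : -x * b' = -(x * b') := neg_mul x b'
      rw [e1]; exact (Ut F).neg_mem (hx b' hb'))
    (by
      intro x y hy b' hb'
      rw [mul_assoc]
      exact (Ut F).mul_mem_left _ _ (hy b' hb'))
    (by
      intro x y hx b' hb'
      rw [mul_assoc]
      exact hx (y * b') ((TwoSidedIdeal.span _).mul_mem_left _ _ hb')))
    (by
      rintro z hz
      rw [Set.mem_singleton_iff] at hz
      subst hz
      rw [SetLike.mem_coe, TwoSidedIdeal.mem_mk']
      intro b' hb'
      exact ey_mul_span_ey F hb')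
  rw [TwoSidedIdeal.mem_mk'] at key
  exact key b hb

/-- The representation `e ↦ E₁₁`, `y ↦ E₁₂` into `2×2` matrices. -/
noncomputable def phi : ERing F →ₐ[F] Matrix (Fin 2) (Fin 2) F :=
  RingQuot.liftAlgHom F ⟨FreeAlgebra.lift F
    ![Matrix.single 0 0 1, Matrix.single 0 1 1], by
      rintro _ _ ⟨⟩
      simp only [map_mul, FreeAlgebra.lift_ι_apply, Matrix.cons_val_zero]
      rw [Matrix.single_mul_single_same, one_mul]⟩

lemma phi_e : phi F (Egen F) = Matrix.single 0 0 1 := by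
  rw [Egen, phi, RingQuot.liftAlgHom_mkAlgHom_apply, FreeAlgebra.lift_ι_apply]
  rfl

lemma phi_y : phi F (Ygen F) = Matrix.single 0 1 1 := by
  rw [Ygen, phi, RingQuot.liftAlgHom_mkAlgHom_apply, FreeAlgebra.lift_ι_apply]
  rfl

lemma YY_zero : (Matrix.single 0 1 1 : Matrix (Fin 2) (Fin 2) F) *
    Matrix.single 0 1 1 = 0 :=
  Matrix.single_mul_single_of_ne (i := 0) (j := 1) (k := 0) (h := by decide) (c := 1) (d := 1)

lemma EYiE_zero {i : ℕ} (hi : 1 ≤ i) :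
    (Matrix.single 0 0 1 : Matrix (Fin 2) (Fin 2) F) *
      Matrix.single 0 1 1 ^ i * Matrix.single 0 0 1 = 0 := by
  rcases Nat.lt_or_ge i 2 with h | h
  · interval_cases i
    rw [pow_one, Matrix.single_mul_single_same, one_mul,
      Matrix.single_mul_single_of_ne (i := 0) (j := 1) (k := 0) (h := by decide) (c := 1) (d := 1)]
  · obtain ⟨j, rfl⟩ : ∃ j, i = 2 + j := ⟨i - 2, by omega⟩
    rw [pow_add, pow_two, YY_zero, zero_mul, mul_zero, zero_mul]

end Aux

/-- In `R = F⟨e,y⟩/(e² − e)`, the ideals `Pₙ` form an ascending chain, whose union equals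
`R e R y e R = (ReR)·(RyeR)`; the union is not semiprime: it contains `(ReyR)²` but not `ey`. -/
theorem stmt_7 (F : Type*) [Field F] :
    Monotone (Pe F) ∧
    UPe F = ↑(mulTSI (TwoSidedIdeal.span {Egen F}) (TwoSidedIdeal.span {Ygen F * Egen F})) ∧
    ↑(mulTSI (TwoSidedIdeal.span {Egen F * Ygen F})
             (TwoSidedIdeal.span {Egen F * Ygen F})) ⊆ UPe F ∧
    Egen F * Ygen F ∉ UPe F := by
  refine ⟨pe_mono F, ?_, ?_, ?_⟩
  · -- UPe = ReR · RyeR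
    apply Set.Subset.antisymm
    · intro x hx
      rw [mem_UPe] at hx
      obtain ⟨n, hn, hx⟩ := hx
      rw [Pe, TwoSidedIdeal.mem_span_iff] at hx
      rw [SetLike.mem_coe]
      refine hx (mulTSI _ _) ?_
      rintro z ⟨i, hi1, hi2, rfl⟩
      apply TwoSidedIdeal.subset_span
      refine ⟨Egen F, TwoSidedIdeal.subset_span rfl, Ygen F ^ i * Egen F, ?_, by
        rw [mul_assoc]⟩
      obtain ⟨j, rfl⟩ : ∃ j, i = j + 1 := ⟨i - 1, by omega⟩
      rw [pow_succ, mul_assoc]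
      exact (TwoSidedIdeal.span _).mul_mem_left _ _ (TwoSidedIdeal.subset_span rfl)
    · intro x hx
      rw [SetLike.mem_coe, mulTSI, TwoSidedIdeal.mem_span_iff] at hx
      have hmem := hx (Ut F) (by
        rintro z ⟨a, ha, b, hb, rfl⟩
        rw [SetLike.mem_coe]
        exact span_e_mul F ha hb)
      rwa [mem_Ut] at hmem
  · -- (ReyR)² ⊆ UPe
    intro x hx
    rw [SetLike.mem_coe, mulTSI, TwoSidedIdeal.mem_span_iff] at hx
    have hmem := hx (Ut F) (by
      rintro z ⟨a, ha, b, hb, rfl⟩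
      rw [SetLike.mem_coe]
      exact span_ey_mul F ha hb)
    rwa [mem_Ut] at hmem
  · -- ey ∉ UPe
    intro h
    rw [mem_UPe] at h
    obtain ⟨n, hn, hx⟩ := h
    rw [Pe, TwoSidedIdeal.mem_span_iff] at hx
    have hker := hx (TwoSidedIdeal.ker (phi F)) (by
      rintro z ⟨i, hi1, hi2, rfl⟩
      rw [SetLike.mem_coe, TwoSidedIdeal.mem_ker]
      rw [map_mul, map_mul, map_pow, phi_e, phi_y]
      exact EYiE_zero F hi1)
    rw [TwoSidedIdeal.mem_ker, map_mul, phi_e, phi_y,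
      Matrix.single_mul_single_same, one_mul] at hker
    have h01 := congrFun (congrFun hker 0) 1
    rw [Matrix.single_apply_same] at h01
    simp at h01
end
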